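/- For every n ≥ 1, the unique indecomposable Fishburn permutation of size n avoiding the classical pattern 312 is the decreasing permutation n(n−1)⋯21; in particular the number of such permutations is 1. -/
import Mathlib

open Finset

/-- The list of values of a permutation of `Fin n` (0-based values). -/
def permList {n : ℕ} (π : Equiv.Perm (Fin n)) : List ℕ :=
  (List.finRange n).map fun i => (π i : ℕ)

/-- A sequence `w` of distinct integers contains the classical pattern `p`:
some subsequence of `w` is order-isomorphic to `p`. -/
def SeqContains (w p : List ℕ) : Prop :=
  ∃ f : Fin p.length → Fin w.length, StrictMono f ∧
    ∀ i j : Fin p.length, p.get i < p.get j ↔ w.get (f i) < w.get (f j)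

/-- A permutation avoids a classical pattern (given as the list of its values). -/
def AvoidsPat {n : ℕ} (π : Equiv.Perm (Fin n)) (p : List ℕ) : Prop :=
  ¬ SeqContains (permList π) p

/-- `π` is a Fishburn permutation: it avoids the bivincular pattern (231,{1},{1}),
i.e. there are no positions `i < k` with `π i = π k + 1` and `π i < π (i+1)`
(0-based values, so `π i = π k + 1` encodes `π(i) > 1` and `π(k) = π(i) - 1`). -/
def IsFishburn {n : ℕ} (π : Equiv.Perm (Fin n)) : Prop :=
  ∀ i k : ℕ, ∀ hi : i < n, ∀ hk : k < n, ∀ _hik : i < k,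
    (π ⟨i, hi⟩ : ℕ) = (π ⟨k, hk⟩ : ℕ) + 1 →
    ¬ ((π ⟨i, hi⟩ : ℕ) < (π ⟨i + 1, by omega⟩ : ℕ))

/-- A permutation is indecomposable if it is not the direct sum of two nonempty
permutations, i.e. no proper nonempty initial segment of positions maps onto the
corresponding initial segment of values. -/
def IsIndecomposable {n : ℕ} (π : Equiv.Perm (Fin n)) : Prop :=
  ¬ ∃ k : ℕ, 0 < k ∧ k < n ∧ ∀ i : Fin n, (i : ℕ) < k → (π i : ℕ) < k

lemma permList_length {n : ℕ} (π : Equiv.Perm (Fin n)) : (permList π).length = n := by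
  simp [permList]

lemma permList_getElem {n : ℕ} (π : Equiv.Perm (Fin n)) (m : ℕ) (h : m < (permList π).length) :
    (permList π)[m] = (π ⟨m, by simpa [permList] using h⟩ : ℕ) := by
  simp [permList]

lemma rev_val {n : ℕ} (i : Fin n) : (Fin.revPerm i : ℕ) = n - 1 - (i : ℕ) := by
  have := i.2
  simp [Fin.val_rev]
  omega

lemma rev_fishburn {n : ℕ} : IsFishburn (Fin.revPerm : Equiv.Perm (Fin n)) := by
  intro i k hi hk hik _ h
  simp only [rev_val] at h
  omega

lemma rev_indec {n : ℕ} (hn : 1 ≤ n) :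
    IsIndecomposable (Fin.revPerm : Equiv.Perm (Fin n)) := by
  rintro ⟨k, hk0, hkn, h⟩
  have := h ⟨0, by omega⟩ (by simpa using hk0)
  rw [rev_val] at this
  simp at this
  omega

lemma rev_avoids {n : ℕ} : AvoidsPat (Fin.revPerm : Equiv.Perm (Fin n)) [3, 1, 2] := by
  rintro ⟨f, hmono, hiso⟩
  set i1 : Fin ([3, 1, 2] : List ℕ).length := ⟨1, by norm_num⟩ with hi1
  set i2 : Fin ([3, 1, 2] : List ℕ).length := ⟨2, by norm_num⟩ with hi2
  have hfl : ∀ m, ((f m : ℕ)) < n := fun m =>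
    lt_of_lt_of_eq (f m).2 (permList_length _)
  have h12 := (hiso i1 i2).mp (by decide)
  have hnat : (f i1 : ℕ) < (f i2 : ℕ) := hmono (by decide)
  simp only [List.get_eq_getElem, permList_getElem, rev_val] at h12
  have h2n := hfl i2
  omega

lemma unique_rev {n : ℕ} (hn : 1 ≤ n) (π : Equiv.Perm (Fin n))
    (hind : IsIndecomposable π) (hfish : IsFishburn π)
    (havd : AvoidsPat π [3, 1, 2]) : π = Fin.revPerm := by
  have key : ∀ j, ∀ _hj : j < n, (π ⟨n - 1 - j, by omega⟩ : ℕ) = j := by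
    intro j
    induction j using Nat.strong_induction_on with
    | _ j IH =>
      intro hj
      match j with
      | 0 =>
        -- position of value 0 must be n-1
        set t := π.symm ⟨0, by omega⟩ with htdef
        have hπt : (π t : ℕ) = 0 := by simp [htdef]
        suffices hts : (t : ℕ) = n - 1 by
          have : (⟨n - 1 - 0, by omega⟩ : Fin n) = t := Fin.ext (by simpa using hts.symm)
          rw [this, hπt]
        by_contra hne
        have ht : (t : ℕ) < n - 1 := by have := t.2; omega
        -- 312 avoidance: everything before t is smaller than everything after t
        have hlt : ∀ p r : Fin n, (p : ℕ) < (t : ℕ) → (t : ℕ) < (r : ℕ) →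
            (π p : ℕ) < (π r : ℕ) := by
          intro p r hp hr
          by_contra hcon
          push_neg at hcon
          have hpr : (π p : ℕ) ≠ (π r : ℕ) := by
            intro h
            have : p = r := π.injective (Fin.ext h)
            rw [this] at hp; omega
          have h0p : (π p : ℕ) ≠ 0 := by
            intro h
            have : p = t := π.injective (Fin.ext (by rw [hπt]; exact h))
            rw [this] at hp; omega
          have h0r : (π r : ℕ) ≠ 0 := by
            intro h
            have : r = t := π.injective (Fin.ext (by rw [hπt]; exact h))
            rw [this] at hr; omega
          apply havd
          refine ⟨fun m => Fin.cast (permList_length π).symm (![p, t, r] m), ?_, ?_⟩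
          · intro a b hab
            fin_cases a <;> fin_cases b <;> first
              | exact absurd hab (by decide)
              | (rw [Fin.lt_def]; simp; omega)
          · intro a b
            fin_cases a <;> fin_cases b <;>
              simp [List.get, permList_getElem, hπt] <;> omega
        -- hence a decomposition at t+1
        apply hind
        refine ⟨(t : ℕ) + 1, by omega, by omega, ?_⟩
        intro i hi
        have hsub : (Finset.Ioi t).image π ⊆ Finset.Ioi (π i) := by
          intro v hv
          simp only [Finset.mem_image, Finset.mem_Ioi] at hv ⊢
          obtain ⟨r, hr, rfl⟩ := hv
          have hr' : (t : ℕ) < (r : ℕ) := hr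
          rcases Nat.lt_succ_iff_lt_or_eq.mp hi with hlt' | heq
          · exact Fin.lt_def.mpr (hlt i r hlt' hr')
          · have hit : i = t := Fin.ext heq
            have hr0 : (π r : ℕ) ≠ 0 := by
              intro h
              have : r = t := π.injective (Fin.ext (by rw [hπt]; exact h))
              rw [this] at hr'; omega
            rw [hit]
            exact Fin.lt_def.mpr (by omega)
        have hcard := Finset.card_le_card hsub
        rw [Finset.card_image_of_injective _ π.injective, Fin.card_Ioi, Fin.card_Ioi] at hcard
        have := (π i).2
        omega
      | (j + 1) =>
        -- position of value j+1 must be n-1-(j+1)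
        set t := π.symm ⟨j + 1, hj⟩ with htdef
        have hπt : (π t : ℕ) = j + 1 := by simp [htdef]
        have ht1 : (t : ℕ) < n - 1 - j := by
          by_contra h
          push_neg at h
          have htn : (t : ℕ) < n := t.2
          have hj' : n - 1 - (t : ℕ) < j + 1 := by omega
          have hIH := IH (n - 1 - (t : ℕ)) hj' (by omega)
          have ht : (⟨n - 1 - (n - 1 - (t : ℕ)), by omega⟩ : Fin n) = t :=
            Fin.ext (by simp; omega)
          rw [ht] at hIH
          omega
        suffices hts : (t : ℕ) = n - 1 - (j + 1) by
          have : (⟨n - 1 - (j + 1), by omega⟩ : Fin n) = t := Fin.ext hts.symm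
          rw [this, hπt]
        by_contra hne
        have htlt : (t : ℕ) < n - 1 - (j + 1) := by omega
        have ht1n : (t : ℕ) + 1 < n := by omega
        -- ascent at t
        have hval : j + 1 < (π ⟨(t : ℕ) + 1, ht1n⟩ : ℕ) := by
          have hvne : (π ⟨(t : ℕ) + 1, ht1n⟩ : ℕ) ≠ j + 1 := by
            intro h
            have : (⟨(t : ℕ) + 1, ht1n⟩ : Fin n) = t :=
              π.injective (Fin.ext (by rw [hπt]; exact h))
            have := congrArg Fin.val this
            simp at this
          by_contra hcon
          push_neg at hcon
          have hsm : (π ⟨(t : ℕ) + 1, ht1n⟩ : ℕ) < j + 1 := by omega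
          have hIH := IH (π ⟨(t : ℕ) + 1, ht1n⟩ : ℕ) hsm (by omega)
          have heq : (⟨(t : ℕ) + 1, ht1n⟩ : Fin n) =
              ⟨n - 1 - (π ⟨(t : ℕ) + 1, ht1n⟩ : ℕ), by omega⟩ :=
            π.injective (Fin.ext hIH.symm)
          have := congrArg Fin.val heq
          simp at this
          omega
        -- Fishburn contradiction with k = position of value j
        have hkn : n - 1 - j < n := by omega
        have hπk : (π ⟨n - 1 - j, hkn⟩ : ℕ) = j := IH j (by omega) (by omega)
        refine hfish (t : ℕ) (n - 1 - j) t.2 hkn (by omega) ?_ ?_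
        · show (π t : ℕ) = (π ⟨n - 1 - j, hkn⟩ : ℕ) + 1
          rw [hπt, hπk]
        · show (π t : ℕ) < (π ⟨(t : ℕ) + 1, ht1n⟩ : ℕ)
          rw [hπt]
          exact hval
  apply Equiv.ext
  intro i
  have hi := i.2
  have hkey := key (n - 1 - (i : ℕ)) (by omega)
  have hieq : (⟨n - 1 - (n - 1 - (i : ℕ)), by omega⟩ : Fin n) = i := Fin.ext (by simp; omega)
  rw [hieq] at hkey
  apply Fin.ext
  rw [hkey, rev_val]

theorem stmt13 (n : ℕ) (hn : 1 ≤ n) :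
    (∀ π : Equiv.Perm (Fin n),
      (IsIndecomposable π ∧ IsFishburn π ∧ AvoidsPat π [3, 1, 2]) ↔
        π = Fin.revPerm) ∧
    Nat.card {π : Equiv.Perm (Fin n) //
        IsIndecomposable π ∧ IsFishburn π ∧ AvoidsPat π [3, 1, 2]} = 1 := by
  have hiff : ∀ π : Equiv.Perm (Fin n),
      (IsIndecomposable π ∧ IsFishburn π ∧ AvoidsPat π [3, 1, 2]) ↔ π = Fin.revPerm := by
    intro π
    constructor
    · rintro ⟨h1, h2, h3⟩
      exact unique_rev hn π h1 h2 h3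
    · rintro rfl
      exact ⟨rev_indec hn, rev_fishburn, rev_avoids⟩
  refine ⟨hiff, ?_⟩
  haveI : Unique {π : Equiv.Perm (Fin n) //
      IsIndecomposable π ∧ IsFishburn π ∧ AvoidsPat π [3, 1, 2]} :=
    { default := ⟨Fin.revPerm, (hiff Fin.revPerm).mpr rfl⟩
      uniq := fun x => Subtype.ext ((hiff x.1).mp x.2) }
  exact Nat.card_unique
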